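/- arXiv:2312.16567 — 2 statements merged into one kernel-verified Lean document; each statement's English description precedes it below -/
import Mathlib

section
/- For every n ≥ 2 and all indices 0 ≤ j ≤ i ≤ n, the coface homomorphisms satisfy d^j ∘ d^i = d^{i+1} ∘ d^j as group homomorphisms T_n → T_{n+2} (where the outer maps are the corresponding coface homomorphisms T_{n+1} → T_{n+2}). -/
/-- Relators of the twin group `Tₘ`: squares of the generators, and far commutativity.
The generator indexed by `i : Fin (m-1)` is the twin `t_{i+1}` (1-based). -/
def twinRels (m : ℕ) : Set (FreeGroup (Fin (m - 1))) :=
  {r | (∃ i : Fin (m - 1), r = FreeGroup.of i * FreeGroup.of i) ∨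
       (∃ i j : Fin (m - 1), ((i : ℕ) + 2 ≤ (j : ℕ) ∨ (j : ℕ) + 2 ≤ (i : ℕ)) ∧
         r = FreeGroup.of i * FreeGroup.of j * (FreeGroup.of i)⁻¹ * (FreeGroup.of j)⁻¹)}

/-- The twin group `Tₘ` on `m` strands as a presented group. -/
abbrev TwinGroup (m : ℕ) : Type := PresentedGroup (twinRels m)

/-- The generator `t_{j+1}` (1-based) of `Tₘ`, for `j : Fin (m-1)`. -/
def twinGen (m : ℕ) (j : Fin (m - 1)) : TwinGroup m := PresentedGroup.of j

/-- `IsCoface m i f` says that `f : Tₘ →* T_{m+1}` is the `i`-th coface homomorphism `dⁱ`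
(`0 ≤ i ≤ m`): `dⁱ(t_j) = t_j` for `j < i`, `dⁱ(t_i) = t_{i+1} t_i t_{i+1}`, and
`dⁱ(t_j) = t_{j+1}` for `j > i`  (1-based `j`, so `t_j = twinGen m ⟨j-1, _⟩`). -/
def IsCoface (m i : ℕ) (f : TwinGroup m →* TwinGroup (m + 1)) : Prop :=
  ∀ j : Fin (m - 1),
    (∀ _ : (j : ℕ) + 1 < i,
      f (twinGen m j) = twinGen (m + 1) ⟨(j : ℕ), by have := j.isLt; omega⟩) ∧
    (∀ _ : (j : ℕ) + 1 = i,
      f (twinGen m j) =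
        twinGen (m + 1) ⟨i, by have := j.isLt; omega⟩ *
        twinGen (m + 1) ⟨i - 1, by have := j.isLt; omega⟩ *
        twinGen (m + 1) ⟨i, by have := j.isLt; omega⟩) ∧
    (∀ _ : i < (j : ℕ) + 1,
      f (twinGen m j) = twinGen (m + 1) ⟨(j : ℕ) + 1, by have := j.isLt; omega⟩)

lemma twinRel_one {m : ℕ} {r : FreeGroup (Fin (m-1))} (hr : r ∈ twinRels m) :
    PresentedGroup.mk (twinRels m) r = 1 :=
  (QuotientGroup.eq_one_iff _).mpr (Subgroup.subset_normalClosure hr)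

lemma twinGen_mul_self (m : ℕ) (a : Fin (m - 1)) : twinGen m a * twinGen m a = 1 := by
  have := twinRel_one (m := m) (Or.inl ⟨a, rfl⟩)
  simpa [twinGen, PresentedGroup.of] using this

lemma twinGen_comm (m : ℕ) (a b : Fin (m - 1))
    (h : (a : ℕ) + 2 ≤ (b : ℕ) ∨ (b : ℕ) + 2 ≤ (a : ℕ)) :
    twinGen m a * twinGen m b = twinGen m b * twinGen m a := by
  have := twinRel_one (m := m) (Or.inr ⟨a, b, h, rfl⟩)
  simp only [map_mul, map_inv] at this
  rw [mul_inv_eq_one, mul_inv_eq_iff_eq_mul] at this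
  exact this

lemma twinGen_congr (m : ℕ) {a b : ℕ} (ha : a < m - 1) (hb : b < m - 1) (h : a = b) :
    twinGen m ⟨a, ha⟩ = twinGen m ⟨b, hb⟩ := by subst h; rfl

/-- For `n ≥ 2` and `0 ≤ j ≤ i ≤ n`, the coface homomorphisms satisfy
`dʲ ∘ dⁱ = d^{i+1} ∘ dʲ` as homomorphisms `Tₙ →* T_{n+2}`. -/
theorem coface_cosimplicial_identity (n : ℕ) (hn : 2 ≤ n) (i j : ℕ)
    (hji : j ≤ i) (hi : i ≤ n)
    (di : TwinGroup n →* TwinGroup (n + 1)) (hdi : IsCoface n i di)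
    (dj : TwinGroup n →* TwinGroup (n + 1)) (hdj : IsCoface n j dj)
    (dj' : TwinGroup (n + 1) →* TwinGroup (n + 2)) (hdj' : IsCoface (n + 1) j dj')
    (di' : TwinGroup (n + 1) →* TwinGroup (n + 2)) (hdi' : IsCoface (n + 1) (i + 1) di') :
    dj'.comp di = di'.comp dj := by
  apply PresentedGroup.ext
  intro k
  have hk := k.isLt
  show dj' (di (twinGen n k)) = di' (dj (twinGen n k))
  obtain ⟨hi1, hi2, hi3⟩ := hdi k
  obtain ⟨hj1, hj2, hj3⟩ := hdj k
  rcases Nat.lt_trichotomy ((k : ℕ) + 1) j with h1 | h1 | h1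
  · -- K < j ≤ i
    rw [hi1 (by omega), hj1 (by omega)]
    rw [(hdj' ⟨(k : ℕ), by omega⟩).1 (by exact h1)]
    rw [(hdi' ⟨(k : ℕ), by omega⟩).1 (by exact (by omega : (k : ℕ) + 1 < i + 1))]
  · -- K = j
    rcases eq_or_lt_of_le hji with h2 | h2
    · -- j = i, hard case
      subst h2
      have hj1' : 1 ≤ j := by omega
      rw [hi2 (by omega), hj2 (by omega), map_mul, map_mul, map_mul, map_mul]
      rw [(hdj' ⟨j, by omega⟩).2.2 (by exact (by omega : j < (j : ℕ) + 1))]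
      rw [(hdj' ⟨j - 1, by omega⟩).2.1 (by exact (by omega : j - 1 + 1 = j))]
      rw [(hdi' ⟨j, by omega⟩).2.1 (by exact (by omega : j + 1 = j + 1))]
      rw [(hdi' ⟨j - 1, by omega⟩).1 (by exact (by omega : j - 1 + 1 < j + 1))]
      -- normalize indices
      set A := twinGen (n + 2) ⟨j + 1, by omega⟩ with hA
      set B := twinGen (n + 2) ⟨j, by omega⟩ with hB
      set C := twinGen (n + 2) ⟨j - 1, by omega⟩ with hC
      have eA : twinGen (n + 2) ⟨j + 1 - 1, by omega⟩ = B :=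
        twinGen_congr _ _ _ (by omega)
      rw [eA]
      -- goal should now be A * (B * C * B) * A = (A * B * A) * C * (A * B * A) up to assoc
      have hAC : A * C = C * A := twinGen_comm _ _ _ (Or.inr (show j - 1 + 2 ≤ j + 1 by omega))
      have hAA : A * A = 1 := twinGen_mul_self _ _
      calc A * (B * C * B) * A
          = A * B * (C * (A * A)) * B * A := by rw [hAA]; group
        _ = A * B * A * C * (A * B * A) := by
            rw [show C * (A * A) = (C * A) * A by group, ← hAC]; group
    · -- K = j < i
      rw [hi1 (by omega), hj2 (by omega)]
      rw [(hdj' ⟨(k : ℕ), by omega⟩).2.1 (by exact h1), map_mul, map_mul]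
      rw [(hdi' ⟨j, by omega⟩).1 (by exact (by omega : j + 1 < i + 1))]
      rw [(hdi' ⟨j - 1, by omega⟩).1 (by exact (by omega : j - 1 + 1 < i + 1))]
  · -- j < K
    rcases Nat.lt_trichotomy ((k : ℕ) + 1) i with h2 | h2 | h2
    · -- j < K < i
      rw [hi1 (by omega), hj3 (by omega)]
      rw [(hdj' ⟨(k : ℕ), by omega⟩).2.2 (by exact h1)]
      rw [(hdi' ⟨(k : ℕ) + 1, by omega⟩).1 (by exact (by omega : (k : ℕ) + 1 + 1 < i + 1))]
    · -- j < K = i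
      rw [hi2 (by omega), hj3 (by omega), map_mul, map_mul]
      rw [(hdj' ⟨i, by omega⟩).2.2 (by exact (by omega : j < i + 1))]
      rw [(hdj' ⟨i - 1, by omega⟩).2.2 (by exact (by omega : j < i - 1 + 1))]
      rw [(hdi' ⟨(k : ℕ) + 1, by omega⟩).2.1 (by exact (by omega : (k : ℕ) + 1 + 1 = i + 1))]
      have e1 : twinGen (n + 2) ⟨i + 1, by omega⟩ = twinGen (n + 2) ⟨i + 1, by omega⟩ := rfl
      have e2 : twinGen (n + 2) ⟨i - 1 + 1, by omega⟩ = twinGen (n + 2) ⟨i + 1 - 1, by omega⟩ :=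
        twinGen_congr _ _ _ (by omega)
      rw [e2]
    · -- i < K
      rw [hi3 (by omega), hj3 (by omega)]
      rw [(hdj' ⟨(k : ℕ) + 1, by omega⟩).2.2 (by exact (by omega : j < (k : ℕ) + 1 + 1))]
      rw [(hdi' ⟨(k : ℕ) + 1, by omega⟩).2.2 (by exact (by omega : i + 1 < (k : ℕ) + 1 + 1))]
end

section
/- Let n ≥ 2 and, in the twin group T_{n+1} with generators t_1, …, t_n, set q_k = t_n t_{n−1} ⋯ t_{k+1} t_k t_{k+1} ⋯ t_{n−1} t_n for 1 ≤ k ≤ n−1 and q_n = t_n. Let Q be the presented group with generators q̄_1, …, q̄_n and defining relations: (1) q̄_i² = 1 for all 1 ≤ i ≤ n; (2) q̄_{i+1} q̄_i q̄_{i+1} commutes with q̄_n for all 1 ≤ i ≤ n−2; (3) q̄_{i+1} q̄_i q̄_{i+1} commutes with q̄_{j+1} q̄_j q̄_{j+1} for all 1 ≤ i, j ≤ n−1 with |i − j| ≥ 2. Then the map q̄_k ↦ q_k extends to a group isomorphism Q ≅ T_{n+1}. -/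
/-- The generator `t_k` (1-based `k`, `1 ≤ k ≤ n`) of the twin group `T_{n+1}`
(and `1` for `k` out of range). -/
def tg (n k : ℕ) : TwinGroup (n + 1) :=
  if h : 1 ≤ k ∧ k ≤ n then twinGen (n + 1) ⟨k - 1, by omega⟩ else 1

/-- `q_k = t_n t_{n-1} ⋯ t_{k+1} · t_k · t_{k+1} ⋯ t_{n-1} t_n ∈ T_{n+1}` for
`1 ≤ k ≤ n-1`, and `q_n = t_n`. -/
def qElt (n k : ℕ) : TwinGroup (n + 1) :=
  (((List.range' (k + 1) (n - k)).reverse).map (tg n)).prod * tg n k *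
    ((List.range' (k + 1) (n - k)).map (tg n)).prod

open scoped commutatorElement

/-- Relators of the paper's new presentation of `T_{n+1}`:  the generator indexed by
`k : Fin n` is `q̄_{k+1}` (1-based).  The relations are (1) `q̄ᵢ² = 1`;
(2) `[q̄_{i+1} q̄_i q̄_{i+1}, q̄_n] = 1` for `1 ≤ i ≤ n-2` (0-based `a = i-1`);
(3) `[q̄_{i+1} q̄_i q̄_{i+1}, q̄_{j+1} q̄_j q̄_{j+1}] = 1` for `1 ≤ i, j ≤ n-1`, `|i-j| ≥ 2`
(0-based `a = i-1`, `b = j-1`). -/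
def qRels (n : ℕ) : Set (FreeGroup (Fin n)) :=
  {r | (∃ k : Fin n, r = FreeGroup.of k * FreeGroup.of k) ∨
       (∃ a : ℕ, ∃ h : a + 3 ≤ n,
         r = ⁅FreeGroup.of (⟨a + 1, by omega⟩ : Fin n) * FreeGroup.of (⟨a, by omega⟩ : Fin n) *
                FreeGroup.of (⟨a + 1, by omega⟩ : Fin n),
              FreeGroup.of (⟨n - 1, by omega⟩ : Fin n)⁆) ∨
       (∃ a b : ℕ, ∃ h : (a + 2 ≤ b ∨ b + 2 ≤ a) ∧ a + 2 ≤ n ∧ b + 2 ≤ n,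
         r = ⁅FreeGroup.of (⟨a + 1, by omega⟩ : Fin n) * FreeGroup.of (⟨a, by omega⟩ : Fin n) *
                FreeGroup.of (⟨a + 1, by omega⟩ : Fin n),
              FreeGroup.of (⟨b + 1, by omega⟩ : Fin n) * FreeGroup.of (⟨b, by omega⟩ : Fin n) *
                FreeGroup.of (⟨b + 1, by omega⟩ : Fin n)⁆)}

section QPresentationProof

private lemma relator_eq_one' {α : Type*} {rels : Set (FreeGroup α)} {r : FreeGroup α}
    (h : r ∈ rels) : PresentedGroup.mk rels r = 1 :=
  (QuotientGroup.eq_one_iff r).mpr (Subgroup.subset_normalClosure h)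

private lemma mk_of' {α : Type*} {rels : Set (FreeGroup α)} (x : α) :
    PresentedGroup.mk rels (FreeGroup.of x) = PresentedGroup.of x := rfl

private lemma of_comm_of_relator' {α : Type*} {rels : Set (FreeGroup α)} {x y : FreeGroup α}
    (h : ⁅x, y⁆ ∈ rels) :
    PresentedGroup.mk rels x * PresentedGroup.mk rels y
      = PresentedGroup.mk rels y * PresentedGroup.mk rels x :=
  commutatorElement_eq_one_iff_mul_comm.mp
    (by rw [← map_commutatorElement]; exact relator_eq_one' h)

private lemma cancel_one' {G : Type*} [Group G] {a b : G} (h : a * b = 1) (x : G) :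
    a * (b * x) = x := by rw [← mul_assoc, h, one_mul]

private lemma prod_map_comm' {G : Type*} [Group G] (x : G) (f : ℕ → G) :
    ∀ l : List ℕ, (∀ a ∈ l, x * f a = f a * x) → x * (l.map f).prod = (l.map f).prod * x := by
  intro l
  induction l with
  | nil => simp
  | cons a t ih =>
    intro h
    simp only [List.map_cons, List.prod_cons]
    rw [← mul_assoc, h a (List.mem_cons_self), mul_assoc,
      ih (fun b hb => h b (List.mem_cons_of_mem _ hb)), mul_assoc]

private lemma rev_prod_mul_prod' {G : Type*} [Group G] (f : ℕ → G) (hf : ∀ a, f a * f a = 1) :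
    ∀ l : List ℕ, (l.reverse.map f).prod * (l.map f).prod = 1 := by
  intro l
  induction l with
  | nil => simp
  | cons a t ih =>
    simp only [List.reverse_cons, List.map_append, List.map_cons, List.map_nil,
      List.prod_append, List.prod_cons, List.prod_nil, mul_one]
    rw [mul_assoc, cancel_one' (hf a), ih]

/-! ### Twin group side -/

private lemma tg_mul_self (n k : ℕ) : tg n k * tg n k = 1 := by
  unfold tg
  split
  · next h =>
    have h1 : (FreeGroup.of (⟨k - 1, by omega⟩ : Fin (n + 1 - 1)) *
        FreeGroup.of (⟨k - 1, by omega⟩ : Fin (n + 1 - 1))) ∈ twinRels (n + 1) :=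
      Or.inl ⟨⟨k - 1, by omega⟩, rfl⟩
    have h2 := relator_eq_one' h1
    rw [map_mul, mk_of'] at h2
    exact h2
  · simp

private lemma tg_comm (n : ℕ) {k l : ℕ} (hkl : k + 2 ≤ l) :
    tg n k * tg n l = tg n l * tg n k := by
  unfold tg
  split
  · next hk =>
    split
    · next hl =>
      have h1 : (⁅FreeGroup.of (⟨k - 1, by omega⟩ : Fin (n + 1 - 1)),
          FreeGroup.of (⟨l - 1, by omega⟩ : Fin (n + 1 - 1))⁆) ∈ twinRels (n + 1) :=
        Or.inr ⟨⟨k - 1, by omega⟩, ⟨l - 1, by omega⟩,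
          Or.inl (show k - 1 + 2 ≤ l - 1 by omega), commutatorElement_def _ _⟩
      have h2 := of_comm_of_relator' h1
      rw [mk_of', mk_of'] at h2
      exact h2
    · simp
  · simp

private def AT (n k : ℕ) : TwinGroup (n + 1) := ((List.range' (k + 1) (n - k)).map (tg n)).prod

private def BT (n k : ℕ) : TwinGroup (n + 1) :=
  ((List.range' (k + 1) (n - k)).reverse.map (tg n)).prod

private lemma qElt_eq (n k : ℕ) : qElt n k = BT n k * tg n k * AT n k := rfl

private lemma BT_mul_AT (n k : ℕ) : BT n k * AT n k = 1 :=
  rev_prod_mul_prod' (tg n) (tg_mul_self n) _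

private lemma AT_mul_BT (n k : ℕ) : AT n k * BT n k = 1 := by
  have h := BT_mul_AT n k
  rw [mul_eq_one_iff_eq_inv] at h
  simp [h]

private lemma AT_succ (n : ℕ) {k : ℕ} (h : k < n) : AT n k = tg n (k + 1) * AT n (k + 1) := by
  unfold AT
  rw [show n - k = (n - (k + 1)) + 1 by omega, List.range'_succ, List.map_cons, List.prod_cons]

private lemma BT_succ (n : ℕ) {k : ℕ} (h : k < n) : BT n k = BT n (k + 1) * tg n (k + 1) := by
  unfold BT
  rw [show n - k = (n - (k + 1)) + 1 by omega, List.range'_succ, List.reverse_cons,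
    List.map_append, List.prod_append, List.map_cons, List.map_nil, List.prod_cons,
    List.prod_nil, mul_one]

private lemma tg_comm_AT (n : ℕ) {m k : ℕ} (h : m + 1 ≤ k) :
    tg n m * AT n k = AT n k * tg n m := by
  refine prod_map_comm' _ _ _ (fun a ha => ?_)
  rw [List.mem_range'_1] at ha
  exact tg_comm n (by omega)

private lemma AT_top (n : ℕ) : AT n n = 1 := by simp [AT]

private lemma qElt_top (n : ℕ) : qElt n n = tg n n := by
  simp [qElt, Nat.sub_self]

private lemma q_conj (n : ℕ) {k : ℕ} (h1 : 1 ≤ k) (h2 : k + 1 ≤ n) :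
    qElt n (k + 1) * qElt n k * qElt n (k + 1) = tg n k := by
  rw [qElt_eq n (k + 1), qElt_eq n k, AT_succ n (show k < n by omega),
    BT_succ n (show k < n by omega)]
  simp only [mul_assoc]
  rw [cancel_one' (AT_mul_BT n (k + 1)), cancel_one' (tg_mul_self n (k + 1)),
    cancel_one' (AT_mul_BT n (k + 1)), cancel_one' (tg_mul_self n (k + 1)),
    tg_comm_AT n (le_refl (k + 1)), cancel_one' (BT_mul_AT n (k + 1))]

private lemma qElt_mul_self (n k : ℕ) : qElt n k * qElt n k = 1 := by
  rw [qElt_eq]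
  simp only [mul_assoc]
  rw [cancel_one' (AT_mul_BT n k), cancel_one' (tg_mul_self n k), BT_mul_AT]

/-! ### Presented group `Q` side -/

private def gQ (n k : ℕ) : PresentedGroup (qRels n) :=
  if h : 1 ≤ k ∧ k ≤ n then PresentedGroup.of ⟨k - 1, by omega⟩ else 1

private def pQ (n k : ℕ) : PresentedGroup (qRels n) := gQ n (k + 1) * gQ n k * gQ n (k + 1)

private lemma gQ_out (n k : ℕ) (h : ¬(1 ≤ k ∧ k ≤ n)) : gQ n k = 1 := dif_neg h

private lemma gQ_in (n k : ℕ) (h : 1 ≤ k ∧ k ≤ n) :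
    gQ n k = PresentedGroup.of (⟨k - 1, by omega⟩ : Fin n) := dif_pos h

private lemma gQ_mul_self (n k : ℕ) : gQ n k * gQ n k = 1 := by
  unfold gQ
  split
  · next h =>
    have h1 : (FreeGroup.of (⟨k - 1, by omega⟩ : Fin n) *
        FreeGroup.of (⟨k - 1, by omega⟩ : Fin n)) ∈ qRels n :=
      Or.inl ⟨⟨k - 1, by omega⟩, rfl⟩
    have h2 := relator_eq_one' h1
    rw [map_mul, mk_of'] at h2
    exact h2
  · simp

private lemma pQ_mul_self (n k : ℕ) : pQ n k * pQ n k = 1 := by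
  unfold pQ
  simp only [mul_assoc]
  rw [cancel_one' (gQ_mul_self n (k + 1)), cancel_one' (gQ_mul_self n k), gQ_mul_self]

private lemma pQ_top (n : ℕ) : pQ n n = gQ n n := by
  unfold pQ
  rw [gQ_out n (n + 1) (by omega), one_mul, mul_one]

private lemma pQ_zero (n : ℕ) : pQ n 0 = 1 := by
  unfold pQ
  rw [gQ_out n 0 (by omega), mul_one, gQ_mul_self]

private lemma pQ_out (n k : ℕ) (h : n < k) : pQ n k = 1 := by
  unfold pQ
  rw [gQ_out n k (by omega), gQ_out n (k + 1) (by omega)]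
  simp

private lemma pQ_comm (n : ℕ) {i j : ℕ} (h1 : 1 ≤ i) (hij : i + 2 ≤ j) :
    pQ n i * pQ n j = pQ n j * pQ n i := by
  rcases Nat.lt_or_ge n j with hj | hj
  · rw [pQ_out n j hj, mul_one, one_mul]
  by_cases hjn : j = n
  · subst hjn
    rw [pQ_top]
    unfold pQ
    rw [gQ_in j (i + 1) ⟨by omega, by omega⟩, gQ_in j i ⟨by omega, by omega⟩,
      gQ_in j j ⟨by omega, by omega⟩]
    have hm : (⁅FreeGroup.of (⟨(i - 1) + 1, by omega⟩ : Fin j) *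
          FreeGroup.of (⟨i - 1, by omega⟩ : Fin j) *
          FreeGroup.of (⟨(i - 1) + 1, by omega⟩ : Fin j),
          FreeGroup.of (⟨j - 1, by omega⟩ : Fin j)⁆) ∈ qRels j :=
      Or.inr (Or.inl ⟨i - 1, by omega, rfl⟩)
    have key := of_comm_of_relator' hm
    simp only [map_mul, mk_of'] at key
    simp only [show i - 1 + 1 = i from by omega] at key
    simp only [Nat.add_sub_cancel]
    exact key
  · have hj2 : j < n := by omega
    unfold pQ
    rw [gQ_in n (i + 1) ⟨by omega, by omega⟩, gQ_in n i ⟨by omega, by omega⟩,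
      gQ_in n (j + 1) ⟨by omega, by omega⟩, gQ_in n j ⟨by omega, by omega⟩]
    have hm : (⁅FreeGroup.of (⟨(i - 1) + 1, by omega⟩ : Fin n) *
          FreeGroup.of (⟨i - 1, by omega⟩ : Fin n) *
          FreeGroup.of (⟨(i - 1) + 1, by omega⟩ : Fin n),
          FreeGroup.of (⟨(j - 1) + 1, by omega⟩ : Fin n) *
          FreeGroup.of (⟨j - 1, by omega⟩ : Fin n) *
          FreeGroup.of (⟨(j - 1) + 1, by omega⟩ : Fin n)⁆) ∈ qRels n :=
      Or.inr (Or.inr ⟨i - 1, j - 1, ⟨Or.inl (by omega), by omega, by omega⟩, rfl⟩)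
    have key := of_comm_of_relator' hm
    simp only [map_mul, mk_of'] at key
    simp only [show i - 1 + 1 = i from by omega, show j - 1 + 1 = j from by omega] at key
    simp only [Nat.add_sub_cancel]
    exact key

private def AQ (n k : ℕ) : PresentedGroup (qRels n) :=
  ((List.range' (k + 1) (n - k)).map (pQ n)).prod

private def BQ (n k : ℕ) : PresentedGroup (qRels n) :=
  ((List.range' (k + 1) (n - k)).reverse.map (pQ n)).prod

private lemma BQ_mul_AQ (n k : ℕ) : BQ n k * AQ n k = 1 :=
  rev_prod_mul_prod' (pQ n) (pQ_mul_self n) _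

private lemma AQ_succ (n : ℕ) {k : ℕ} (h : k < n) : AQ n k = pQ n (k + 1) * AQ n (k + 1) := by
  unfold AQ
  rw [show n - k = (n - (k + 1)) + 1 by omega, List.range'_succ, List.map_cons, List.prod_cons]

private lemma AQ_top (n : ℕ) : AQ n n = 1 := by simp [AQ]

private lemma BQ_top (n : ℕ) : BQ n n = 1 := by simp [BQ]

private lemma pQ_comm_AQ (n : ℕ) {i k : ℕ} (h1 : 1 ≤ i) (h : i + 1 ≤ k) :
    pQ n i * AQ n k = AQ n k * pQ n i := by
  refine prod_map_comm' _ _ _ (fun a ha => ?_)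
  rw [List.mem_range'_1] at ha
  exact pQ_comm n h1 (by omega)

private lemma AQ_mul_gQ (n : ℕ) : ∀ d k, n = k + d + 1 → AQ n k = AQ n (k + 1) * gQ n (k + 1) := by
  intro d
  induction d with
  | zero =>
    intro k hk
    rw [AQ_succ n (by omega), show k + 1 = n from by omega, AQ_top, pQ_top, mul_one, one_mul]
  | succ d ih =>
    intro k hk
    rw [AQ_succ n (by omega), ih (k + 1) (by omega)]
    have hp : pQ n (k + 1) * gQ n (k + 1 + 1) = gQ n (k + 1 + 1) * gQ n (k + 1) := by
      unfold pQ
      simp only [mul_assoc]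
      rw [gQ_mul_self n (k + 1 + 1), mul_one]
    rw [← mul_assoc, pQ_comm_AQ n (by omega) (by omega), mul_assoc, hp, ← mul_assoc]

private lemma BQ_pQ_AQ (n : ℕ) {k : ℕ} (h1 : 1 ≤ k) (h2 : k ≤ n) :
    BQ n k * pQ n k * AQ n k = gQ n k := by
  rcases eq_or_lt_of_le h2 with rfl | hlt
  · rw [AQ_top, BQ_top, one_mul, mul_one, pQ_top]
  · have hE := AQ_mul_gQ n (n - k) (k - 1) (by omega)
    have hS : AQ n (k - 1) = pQ n (k - 1 + 1) * AQ n (k - 1 + 1) := AQ_succ n (by omega)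
    simp only [show k - 1 + 1 = k from by omega] at hE hS
    have key : pQ n k * AQ n k = AQ n k * gQ n k := by rw [← hS, hE]
    rw [mul_assoc, key, ← mul_assoc, BQ_mul_AQ, one_mul]

/-! ### The two homomorphisms -/

private lemma phi_rels (n : ℕ) :
    ∀ r ∈ qRels n, FreeGroup.lift (fun k : Fin n => qElt n ((k : ℕ) + 1)) r = 1 := by
  intro r hr
  rcases hr with ⟨k, rfl⟩ | ⟨a, ha, rfl⟩ | ⟨a, b, ⟨hab, ha, hb⟩, rfl⟩
  · rw [map_mul, FreeGroup.lift_apply_of]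
    exact qElt_mul_self n _
  · rw [map_commutatorElement, commutatorElement_eq_one_iff_mul_comm]
    simp only [map_mul, FreeGroup.lift_apply_of]
    show qElt n (a + 1 + 1) * qElt n (a + 1) * qElt n (a + 1 + 1) * qElt n (n - 1 + 1)
        = qElt n (n - 1 + 1) * (qElt n (a + 1 + 1) * qElt n (a + 1) * qElt n (a + 1 + 1))
    rw [q_conj n (by omega : 1 ≤ a + 1) (by omega), show n - 1 + 1 = n from by omega, qElt_top]
    exact tg_comm n (by omega)
  · rw [map_commutatorElement, commutatorElement_eq_one_iff_mul_comm]
    simp only [map_mul, FreeGroup.lift_apply_of]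
    show qElt n (a + 1 + 1) * qElt n (a + 1) * qElt n (a + 1 + 1) *
        (qElt n (b + 1 + 1) * qElt n (b + 1) * qElt n (b + 1 + 1))
        = qElt n (b + 1 + 1) * qElt n (b + 1) * qElt n (b + 1 + 1) *
        (qElt n (a + 1 + 1) * qElt n (a + 1) * qElt n (a + 1 + 1))
    rw [q_conj n (by omega : 1 ≤ a + 1) (by omega), q_conj n (by omega : 1 ≤ b + 1) (by omega)]
    rcases hab with h | h
    · exact tg_comm n (by omega)
    · exact (tg_comm n (by omega)).symm

private lemma psi_rels (n : ℕ) :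
    ∀ r ∈ twinRels (n + 1),
      FreeGroup.lift (fun j : Fin (n + 1 - 1) => pQ n ((j : ℕ) + 1)) r = 1 := by
  intro r hr
  rcases hr with ⟨i, rfl⟩ | ⟨i, j, hij, rfl⟩
  · rw [map_mul, FreeGroup.lift_apply_of]
    exact pQ_mul_self n _
  · have : (FreeGroup.of i * FreeGroup.of j * (FreeGroup.of i)⁻¹ * (FreeGroup.of j)⁻¹ :
        FreeGroup (Fin (n + 1 - 1))) = ⁅FreeGroup.of i, FreeGroup.of j⁆ :=
      (commutatorElement_def _ _).symm
    rw [this, map_commutatorElement, commutatorElement_eq_one_iff_mul_comm,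
      FreeGroup.lift_apply_of, FreeGroup.lift_apply_of]
    rcases hij with h | h
    · exact pQ_comm n (by omega) (by omega)
    · exact (pQ_comm n (by omega) (by omega)).symm

private def phiHom (n : ℕ) : PresentedGroup (qRels n) →* TwinGroup (n + 1) :=
  PresentedGroup.toGroup (phi_rels n)

private def psiHom (n : ℕ) : TwinGroup (n + 1) →* PresentedGroup (qRels n) :=
  PresentedGroup.toGroup (psi_rels n)

private lemma psi_tg (n m : ℕ) : psiHom n (tg n m) = pQ n m := by
  unfold tg
  split
  · next h =>
    show psiHom n (PresentedGroup.of _) = _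
    rw [psiHom, PresentedGroup.toGroup.of]
    show pQ n (m - 1 + 1) = pQ n m
    rw [Nat.sub_add_cancel h.1]
  · next h =>
    rw [map_one]
    by_cases hm : m = 0
    · subst hm; exact (pQ_zero n).symm
    · exact (pQ_out n m (by omega)).symm

private lemma phi_gQ_in (n m : ℕ) (h : 1 ≤ m ∧ m ≤ n) : phiHom n (gQ n m) = qElt n m := by
  rw [gQ_in n m h, phiHom, PresentedGroup.toGroup.of]
  show qElt n (m - 1 + 1) = qElt n m
  rw [Nat.sub_add_cancel h.1]

private lemma phi_gQ_out (n m : ℕ) (h : ¬(1 ≤ m ∧ m ≤ n)) : phiHom n (gQ n m) = 1 := by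
  rw [gQ_out n m h, map_one]

private lemma phi_pQ (n m : ℕ) (h1 : 1 ≤ m) (h2 : m ≤ n) : phiHom n (pQ n m) = tg n m := by
  unfold pQ
  rw [map_mul, map_mul, phi_gQ_in n m ⟨h1, h2⟩]
  rcases eq_or_lt_of_le h2 with rfl | hlt
  · rw [phi_gQ_out m (m + 1) (by omega), one_mul, mul_one, qElt_top]
  · rw [phi_gQ_in n (m + 1) ⟨by omega, by omega⟩]
    exact q_conj n h1 (by omega)

private lemma psi_qElt (n k : ℕ) (h1 : 1 ≤ k) (h2 : k ≤ n) :
    psiHom n (qElt n k) = gQ n k := by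
  have hmap : ∀ l : List ℕ, psiHom n ((l.map (tg n)).prod) = (l.map (pQ n)).prod := by
    intro l
    rw [map_list_prod, List.map_map]
    exact congrArg List.prod (List.map_congr_left (fun a _ => psi_tg n a))
  have : psiHom n (qElt n k) = BQ n k * pQ n k * AQ n k := by
    rw [qElt_eq, map_mul, map_mul, psi_tg n k]
    show psiHom n (BT n k) * _ * psiHom n (AT n k) = _
    rw [show BT n k = (((List.range' (k + 1) (n - k)).reverse).map (tg n)).prod from rfl,
      show AT n k = ((List.range' (k + 1) (n - k)).map (tg n)).prod from rfl, hmap, hmap]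
    rfl
  rw [this]
  exact BQ_pQ_AQ n h1 h2

/-- The map `q̄_k ↦ q_k` extends to an isomorphism from the presented group
`Q = ⟨q̄_1, …, q̄_n ∣ (1), (2), (3)⟩` onto `T_{n+1}`. -/

theorem q_presentation (n : ℕ) (hn : 2 ≤ n) :
    ∃ e : PresentedGroup (qRels n) ≃* TwinGroup (n + 1),
      ∀ k : Fin n, e (PresentedGroup.of k) = qElt n ((k : ℕ) + 1) := by
  have h1 : (psiHom n).comp (phiHom n) = MonoidHom.id _ := by
    apply PresentedGroup.ext
    intro x
    simp only [MonoidHom.comp_apply, MonoidHom.id_apply, phiHom, PresentedGroup.toGroup.of]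
    rw [psi_qElt n ((x : ℕ) + 1) (by omega) (by have := x.isLt; omega)]
    rw [gQ_in n ((x : ℕ) + 1) ⟨by omega, by have := x.isLt; omega⟩]
    congr 1
  have h2 : (phiHom n).comp (psiHom n) = MonoidHom.id _ := by
    apply PresentedGroup.ext
    intro x
    simp only [MonoidHom.comp_apply, MonoidHom.id_apply, psiHom, PresentedGroup.toGroup.of]
    rw [phi_pQ n ((x : ℕ) + 1) (by omega) (by have := x.isLt; omega)]
    unfold tg
    rw [dif_pos ⟨by omega, by have := x.isLt; omega⟩]
    unfold twinGen
    congr 1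
  refine ⟨MonoidHom.toMulEquiv (phiHom n) (psiHom n) h1 h2, fun k => ?_⟩
  show phiHom n (PresentedGroup.of k) = qElt n ((k : ℕ) + 1)
  rw [phiHom, PresentedGroup.toGroup.of]
end QPresentationProof
end
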